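/- Let U be a chain code with qturn(P) ∈ {-1, 0, 1} for every prefix P of U. If P is a prefix of U with qturn(P) = 0, then the final point of the unfolding dual path of P has y-coordinate strictly greater than the y-coordinate of every earlier point of that path. -/

import Mathlib

inductive TurnSym : Type
  | L | R | S
deriving DecidableEq

def qt : TurnSym → ℤ
  | TurnSym.L => -1
  | TurnSym.R => 1
  | TurnSym.S => 0

def qturn (U : List TurnSym) : ℤ := (U.map qt).sum

def rot : TurnSym → ℤ × ℤ → ℤ × ℤ
  | TurnSym.R, d => (d.2, -d.1)
  | TurnSym.L, d => (-d.2, d.1)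
  | TurnSym.S, d => d

def pathStep (s : (ℤ × ℤ) × (ℤ × ℤ)) (a : TurnSym) : (ℤ × ℤ) × (ℤ × ℤ) :=
  let d := rot a s.2
  (s.1 + d, d)

/-- Points p_0 = (0,0), p_1 = (0,1), ..., p_{n+1} of the unfolding dual path. -/
def pts (U : List TurnSym) : List (ℤ × ℤ) :=
  (0, 0) :: (List.scanl pathStep ((0, 1), (0, 1)) U).map Prod.fst

/-- 90° clockwise rotation. -/
def cw (d : ℤ × ℤ) : ℤ × ℤ := (d.2, -d.1)

/-- Final heading after processing a chain code from initial heading (0,1). -/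
def headAfter (U : List TurnSym) : ℤ × ℤ := U.foldl (fun d a => rot a d) (0, 1)

/-- Reflection of a chain code: swap L and R. -/
def reflCode (U : List TurnSym) : List TurnSym :=
  U.map fun a => match a with
    | TurnSym.L => TurnSym.R
    | TurnSym.R => TurnSym.L
    | TurnSym.S => TurnSym.S

/-- Action of a chain code on an arbitrary initial heading. -/
def act (U : List TurnSym) (d : ℤ × ℤ) : ℤ × ℤ := U.foldl (fun d a => rot a d) d

/-!
While every prefix has quarter-turn count in `{-1, 0, 1}`, the heading after a prefix `Q` is
determined by `qturn Q`: east, north or west. So no step of the dual path goes down, and the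
step ending a prefix with `qturn = 0` goes straight up.
-/

def TurnBounded (U : List TurnSym) : Prop := ∀ Q, Q <+: U → qturn Q ∈ ({-1, 0, 1} : Set ℤ)

lemma TurnBounded.of_prefix {U P : List TurnSym} (h : TurnBounded U) (hP : P <+: U) :
    TurnBounded P :=
  fun Q hQ => h Q (hQ.trans hP)

lemma TurnBounded.of_concat {Q : List TurnSym} {a : TurnSym} (h : TurnBounded (Q ++ [a])) :
    TurnBounded Q :=
  h.of_prefix (Q.prefix_append [a])

-- Only meaningful for `k ∈ {-1, 0, 1}`; other values are sent to north.
def heading (k : ℤ) : ℤ × ℤ := if k = 1 then (1, 0) else if k = -1 then (-1, 0) else (0, 1)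

lemma heading_snd_nonneg (k : ℤ) : 0 ≤ (heading k).2 := by
  unfold heading; split_ifs <;> simp

lemma rot_heading {k : ℤ} {a : TurnSym} (hk : k ∈ ({-1, 0, 1} : Set ℤ))
    (hka : k + qt a ∈ ({-1, 0, 1} : Set ℤ)) : rot a (heading k) = heading (k + qt a) := by
  simp only [Set.mem_insert_iff, Set.mem_singleton_iff] at hk hka
  rcases hk with rfl | rfl | rfl <;> cases a <;> simp_all [heading, rot, qt]

lemma qturn_concat (Q : List TurnSym) (a : TurnSym) : qturn (Q ++ [a]) = qturn Q + qt a := by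
  simp [qturn]

lemma headAfter_concat (Q : List TurnSym) (a : TurnSym) :
    headAfter (Q ++ [a]) = rot a (headAfter Q) := by
  simp [headAfter]

lemma headAfter_eq_heading (P : List TurnSym) (h : TurnBounded P) : headAfter P = heading (qturn P) := by
  induction P using List.reverseRecOn with
  | nil => simp [headAfter, qturn, heading]
  | append_singleton Q a ih =>
    have hQa := h (Q ++ [a]) (List.prefix_refl _)
    rw [qturn_concat] at hQa ⊢
    rw [headAfter_concat, ih h.of_concat, rot_heading (h.of_concat Q (List.prefix_refl Q)) hQa]

lemma snd_foldl_pathStep (P : List TurnSym) (s : (ℤ × ℤ) × (ℤ × ℤ)) :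
    (P.foldl pathStep s).2 = act P s.2 := by
  induction P generalizing s with
  | nil => rfl
  | cons a t ih => exact ih (pathStep s a)

lemma getLastD_pts (P : List TurnSym) :
    (pts P).getLastD (0, 0) = (P.foldl pathStep ((0, 1), (0, 1))).1 := by
  rw [pts, List.getLastD_cons, List.getLastD_eq_getLast?, List.getLast?_map,
    List.getLast?_scanl]
  rfl

lemma pts_concat (Q : List TurnSym) (a : TurnSym) :
    pts (Q ++ [a]) = pts Q ++ [(pts Q).getLastD (0, 0) + headAfter (Q ++ [a])] := by
  have hhead : headAfter (Q ++ [a]) = rot a (Q.foldl pathStep ((0, 1), (0, 1))).2 := by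
    rw [headAfter_concat, snd_foldl_pathStep]; rfl
  rw [getLastD_pts, hhead]
  simp [pts, List.scanl_append, pathStep]

lemma snd_le_snd_getLastD_pts (P : List TurnSym) (h : TurnBounded P) :
    ∀ q ∈ pts P, q.2 ≤ ((pts P).getLastD (0, 0)).2 := by
  induction P using List.reverseRecOn with
  | nil => decide
  | append_singleton Q a ih =>
    have hup : 0 ≤ (headAfter (Q ++ [a])).2 := by
      rw [headAfter_eq_heading _ h]; exact heading_snd_nonneg _
    rw [pts_concat, List.getLastD_concat]
    intro q hq
    rcases List.mem_append.1 hq with hq | hq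
    · have := ih h.of_concat q hq
      simp only [Prod.snd_add]
      omega
    · rw [List.mem_singleton.1 hq]

theorem stmt2 (U P : List TurnSym)
    (h : ∀ Q, Q <+: U → qturn Q ∈ ({-1, 0, 1} : Set ℤ))
    (hP : P <+: U) (h0 : qturn P = 0) :
    ∀ q ∈ (pts P).dropLast, q.2 < ((pts P).getLastD (0, 0)).2 := by
  have hbdd : TurnBounded P := TurnBounded.of_prefix h hP
  rcases List.eq_nil_or_concat P with rfl | ⟨Q, a, rfl⟩
  · decide
  rw [List.concat_eq_append] at hbdd h0 ⊢
  have hnorth : headAfter (Q ++ [a]) = (0, 1) := by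
    rw [headAfter_eq_heading _ hbdd, h0]; rfl
  rw [pts_concat, List.dropLast_concat, List.getLastD_concat, hnorth]
  intro q hq
  have := snd_le_snd_getLastD_pts Q hbdd.of_concat q hq
  simp only [Prod.snd_add]
  omega
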